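/- For the Kähler AR(2) geometry, ψ₃ = (1 − ξ¹ξ̄²)(1 − ξ²ξ̄¹)(1 − |ξ¹|²)(1 − |ξ²|²) satisfies Δψ₃ = −6·ψ₃, hence ψ₃ is a positive superharmonic function (an eigenfunction of the Laplace–Beltrami operator). -/

import Mathlib

/-- Holomorphic partial derivative `∂_i F` in the `i`-th complex coordinate. -/
noncomputable def pd {n : ℕ} (F : (Fin n → ℂ) → ℂ) (i : Fin n) (ξ : Fin n → ℂ) : ℂ :=
  deriv (fun t => F (Function.update ξ i t)) (ξ i)

/-- Componentwise complex conjugation of a coordinate vector. -/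
def conjVec {n : ℕ} (ζ : Fin n → ℂ) : Fin n → ℂ := fun m => starRingEnd ℂ (ζ m)

/-- The mixed Wirtinger Hessian `∂_i ∂_{¯j} ψ` of a function given in the polarized form
`ψc ξ ζ` (holomorphic in `ξ` and in `ζ`), evaluated at `ζ = conj ξ`. -/
noncomputable def mixedHess {n : ℕ} (ψc : (Fin n → ℂ) → (Fin n → ℂ) → ℂ)
    (ξ : Fin n → ℂ) (i j : Fin n) : ℂ :=
  pd (fun ξ' => pd (ψc ξ') j (conjVec ξ)) i ξ

/-- The AR metric `g_{i¯j} = 1/(1 − ξ^i conj(ξ^j))`. -/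
noncomputable def arMetric {n : ℕ} (ξ : Fin n → ℂ) : Matrix (Fin n) (Fin n) ℂ :=
  Matrix.of fun i j => 1 / (1 - ξ i * starRingEnd ℂ (ξ j))

/-- The Kähler Laplace–Beltrami operator `Δψ = 2 g^{i¯j} ∂_i ∂_{¯j} ψ`, with
`g^{i¯j} = (g⁻¹)_{ji}`. -/
noncomputable def kahlerLap {n : ℕ} (ψc : (Fin n → ℂ) → (Fin n → ℂ) → ℂ)
    (ξ : Fin n → ℂ) : ℂ :=
  2 * ∑ i, ∑ j, (arMetric ξ)⁻¹ j i * mixedHess ψc ξ i j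

/-!
The polarization `ψ(x, ζ) = (1 - x₀ζ₁)(1 - x₁ζ₀)(1 - x₀ζ₀)(1 - x₁ζ₁)` is quadratic in each single
variable, so its mixed Hessian is an explicit polynomial. The metric `1/(1 - ξ^i ξ̄^j)` is a
Cauchy-type matrix: its inverse is a polynomial matrix divided by `|ξ¹ - ξ²|²`, and contracting
it against the Hessian gives `-6ψ₃` once that single denominator is cleared. Positivity holds
because `1 - ξ¹ξ̄²` and `1 - ξ²ξ̄¹` are conjugate, so
`ψ₃ = |1 - ξ¹ξ̄²|² (1 - |ξ¹|²)(1 - |ξ²|²)`.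
-/

open ComplexConjugate

lemma pd_eq_of_update_eq_quadratic {n : ℕ} {F : (Fin n → ℂ) → ℂ} {i : Fin n} {ξ : Fin n → ℂ}
    {p q r : ℂ} (h : ∀ t, F (Function.update ξ i t) = p + q * t + r * t ^ 2) :
    pd F i ξ = q + 2 * r * ξ i := by
  have hderiv : HasDerivAt (fun t => p + q * t + r * t ^ 2)
      (0 + q * 1 + r * (↑2 * ξ i ^ (2 - 1))) (ξ i) :=
    ((hasDerivAt_const _ p).add ((hasDerivAt_id' _).const_mul q)).add
      ((hasDerivAt_pow 2 _).const_mul r)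
  rw [pd, funext h, hderiv.deriv]
  ring

lemma one_sub_mul_ne_zero_of_norm_lt_one {R : Type*} [NormedRing R] [NormOneClass R] {z w : R}
    (hz : ‖z‖ < 1) (hw : ‖w‖ < 1) : 1 - z * w ≠ 0 := by
  rw [sub_ne_zero]
  intro h
  have := norm_mul_le z w
  rw [← h, norm_one] at this
  nlinarith [norm_nonneg z, norm_nonneg w]

def arPsi3 (x ζ : Fin 2 → ℂ) : ℂ :=
  (1 - x 0 * ζ 1) * (1 - x 1 * ζ 0) * (1 - x 0 * ζ 0) * (1 - x 1 * ζ 1)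

-- `j.rev` is the other index of `Fin 2`.
lemma pd_arPsi3 (x ζ : Fin 2 → ℂ) (j : Fin 2) :
    pd (arPsi3 x) j ζ
      = (1 - x 0 * ζ j.rev) * (1 - x 1 * ζ j.rev) * (2 * x 0 * x 1 * ζ j - x 0 - x 1) := by
  rw [pd_eq_of_update_eq_quadratic (p := (1 - x 0 * ζ j.rev) * (1 - x 1 * ζ j.rev))
    (q := (1 - x 0 * ζ j.rev) * (1 - x 1 * ζ j.rev) * -(x 0 + x 1))
    (r := (1 - x 0 * ζ j.rev) * (1 - x 1 * ζ j.rev) * (x 0 * x 1))]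
  · ring
  · intro t
    fin_cases j <;>
      simp only [arPsi3, Fin.zero_eta, Fin.mk_one, Fin.isValue, Function.update_self, ne_eq,
        one_ne_zero, zero_ne_one, not_false_eq_true, Function.update_of_ne, Fin.rev_zero,
        Fin.reduceLast, Fin.reduceRev] <;> ring

lemma mixedHess_arPsi3 (ξ : Fin 2 → ℂ) (i j : Fin 2) :
    mixedHess arPsi3 ξ i j
      = -conj (ξ j.rev) * (1 - ξ i.rev * conj (ξ j.rev))
          * (2 * ξ i * ξ i.rev * conj (ξ j) - ξ i - ξ i.rev)
        + (1 - ξ i * conj (ξ j.rev)) * (1 - ξ i.rev * conj (ξ j.rev))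
          * (2 * ξ i.rev * conj (ξ j) - 1) := by
  simp only [mixedHess, pd_arPsi3, conjVec]
  set W := conj (ξ j)
  set W' := conj (ξ j.rev)
  rw [pd_eq_of_update_eq_quadratic (p := -ξ i.rev * (1 - ξ i.rev * W'))
    (q := (1 - ξ i.rev * W') * (2 * ξ i.rev * W - 1 + ξ i.rev * W'))
    (r := (1 - ξ i.rev * W') * (W' - 2 * ξ i.rev * W * W'))]
  · ring
  · intro t
    fin_cases i <;>
      simp only [Fin.zero_eta, Fin.mk_one, Fin.isValue, Function.update_self, ne_eq,
        one_ne_zero, zero_ne_one, not_false_eq_true, Function.update_of_ne, Fin.rev_zero,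
        Fin.reduceLast, Fin.reduceRev] <;> ring

lemma inv_fin_two_of_one_div {K : Type*} [Field K] {p q r s : K}
    (hp : p ≠ 0) (hq : q ≠ 0) (hr : r ≠ 0) (hs : s ≠ 0) (hdet : q * r - p * s ≠ 0) :
    !![1 / p, 1 / q; 1 / r, 1 / s]⁻¹
      = (q * r - p * s)⁻¹ • !![p * q * r, -(p * r * s); -(p * q * s), q * r * s] := by
  apply Matrix.inv_eq_right_inv
  ext i j
  fin_cases i <;> fin_cases j <;>
    simp only [Matrix.smul_of, Matrix.smul_cons, smul_eq_mul, Matrix.smul_empty, Fin.zero_eta,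
      Fin.mk_one, Fin.isValue, Matrix.mul_apply, Matrix.of_apply, Matrix.cons_val',
      Matrix.cons_val_fin_one, Matrix.cons_val_zero, Matrix.cons_val_one, Fin.sum_univ_two,
      Matrix.one_apply_eq, Matrix.one_apply_ne, ne_eq, zero_ne_one, one_ne_zero,
      not_false_eq_true] <;> grind

lemma arMetric_fin_two (ξ : Fin 2 → ℂ) :
    arMetric ξ = !![1 / (1 - ξ 0 * conj (ξ 0)), 1 / (1 - ξ 0 * conj (ξ 1));
      1 / (1 - ξ 1 * conj (ξ 0)), 1 / (1 - ξ 1 * conj (ξ 1))] :=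
  Matrix.eta_fin_two _

theorem kahlerLap_arPsi3 (ξ : Fin 2 → ℂ) (hg : ∀ i j, 1 - ξ i * conj (ξ j) ≠ 0)
    (hne : ξ 0 ≠ ξ 1) : kahlerLap arPsi3 ξ = -6 * arPsi3 ξ (conjVec ξ) := by
  have hcauchy : (1 - ξ 0 * conj (ξ 1)) * (1 - ξ 1 * conj (ξ 0))
      - (1 - ξ 0 * conj (ξ 0)) * (1 - ξ 1 * conj (ξ 1)) = (ξ 0 - ξ 1) * conj (ξ 0 - ξ 1) := by
    rw [map_sub]; ring
  have hdet : (ξ 0 - ξ 1) * conj (ξ 0 - ξ 1) ≠ 0 := by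
    rw [Complex.mul_conj, Complex.ofReal_ne_zero, Ne, Complex.normSq_eq_zero]
    exact sub_ne_zero.mpr hne
  have hc := mul_inv_cancel₀ hdet
  simp only [kahlerLap, arMetric_fin_two, inv_fin_two_of_one_div (hg 0 0) (hg 0 1)
    (hg 1 0) (hg 1 1) (hcauchy ▸ hdet), hcauchy, mixedHess_arPsi3, Fin.sum_univ_two]
  -- Once `|ξ 0 - ξ 1|⁻²` is named `c`, with `|ξ 0 - ξ 1|² * c = 1`, the identity is polynomial.
  generalize ((ξ 0 - ξ 1) * conj (ξ 0 - ξ 1))⁻¹ = c at hc ⊢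
  simp only [arPsi3, conjVec, map_sub, Matrix.smul_apply, Matrix.of_apply, Matrix.cons_val',
    Matrix.cons_val_zero, Matrix.cons_val_one, Matrix.cons_val_fin_one, smul_eq_mul,
    Fin.rev_zero, Fin.reduceLast, Fin.reduceRev] at hc ⊢
  linear_combination (-6 * (1 - ξ 0 * conj (ξ 1)) * (1 - ξ 1 * conj (ξ 0))
    * (1 - ξ 0 * conj (ξ 0)) * (1 - ξ 1 * conj (ξ 1))) * hc

lemma arPsi3_conjVec_eq_ofReal (ξ : Fin 2 → ℂ) :
    arPsi3 ξ (conjVec ξ) = ((Complex.normSq (1 - ξ 0 * conj (ξ 1))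
      * (1 - Complex.normSq (ξ 0)) * (1 - Complex.normSq (ξ 1)) : ℝ) : ℂ) := by
  have hconj : 1 - ξ 1 * conj (ξ 0) = conj (1 - ξ 0 * conj (ξ 1)) := by simp [mul_comm]
  simp only [arPsi3, conjVec, hconj, Complex.mul_conj]
  push_cast
  ring

lemma arPsi3_conjVec_im (ξ : Fin 2 → ℂ) : (arPsi3 ξ (conjVec ξ)).im = 0 := by
  rw [arPsi3_conjVec_eq_ofReal, Complex.ofReal_im]

lemma arPsi3_conjVec_re_pos {ξ : Fin 2 → ℂ} (h0 : ‖ξ 0‖ < 1) (h1 : ‖ξ 1‖ < 1) :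
    0 < (arPsi3 ξ (conjVec ξ)).re := by
  have hfac : 1 - ξ 0 * conj (ξ 1) ≠ 0 :=
    one_sub_mul_ne_zero_of_norm_lt_one h0 (by rwa [Complex.norm_conj])
  have hsq : ∀ z : ℂ, ‖z‖ < 1 → 0 < 1 - Complex.normSq z := fun z hz => by
    rw [Complex.normSq_eq_norm_sq]; nlinarith [norm_nonneg z]
  rw [arPsi3_conjVec_eq_ofReal, Complex.ofReal_re]
  exact mul_pos (mul_pos (Complex.normSq_pos.mpr hfac) (hsq _ h0)) (hsq _ h1)

/-- For the Kähler AR(2) geometry,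
`ψ₃ = (1 − ξ¹ξ̄²)(1 − ξ²ξ̄¹)(1 − |ξ¹|²)(1 − |ξ²|²)` satisfies `Δψ₃ = −6ψ₃`, hence `ψ₃`
is a positive superharmonic eigenfunction of the Laplace–Beltrami operator. -/
theorem stmt18 (ξ : Fin 2 → ℂ) (h0 : ‖ξ 0‖ < 1) (h1 : ‖ξ 1‖ < 1) (hne : ξ 0 ≠ ξ 1) :
    kahlerLap
        (fun ξ' ζ => (1 - ξ' 0 * ζ 1) * (1 - ξ' 1 * ζ 0) * (1 - ξ' 0 * ζ 0) * (1 - ξ' 1 * ζ 1))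
        ξ
      = -6 * ((1 - ξ 0 * starRingEnd ℂ (ξ 1)) * (1 - ξ 1 * starRingEnd ℂ (ξ 0))
          * (1 - ξ 0 * starRingEnd ℂ (ξ 0)) * (1 - ξ 1 * starRingEnd ℂ (ξ 1)))
      ∧ 0 < ((1 - ξ 0 * starRingEnd ℂ (ξ 1)) * (1 - ξ 1 * starRingEnd ℂ (ξ 0))
          * (1 - ξ 0 * starRingEnd ℂ (ξ 0)) * (1 - ξ 1 * starRingEnd ℂ (ξ 1))).re
      ∧ ((1 - ξ 0 * starRingEnd ℂ (ξ 1)) * (1 - ξ 1 * starRingEnd ℂ (ξ 0))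
          * (1 - ξ 0 * starRingEnd ℂ (ξ 0)) * (1 - ξ 1 * starRingEnd ℂ (ξ 1))).im = 0 := by
  have hdisk : ∀ i, ‖ξ i‖ < 1 := Fin.forall_fin_two.mpr ⟨h0, h1⟩
  have hg : ∀ i j, 1 - ξ i * conj (ξ j) ≠ 0 := fun i j =>
    one_sub_mul_ne_zero_of_norm_lt_one (hdisk i) (by rw [Complex.norm_conj]; exact hdisk j)
  exact ⟨kahlerLap_arPsi3 ξ hg hne, arPsi3_conjVec_re_pos h0 h1, arPsi3_conjVec_im ξ⟩
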